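/- For all x in [0, π], min(1, (4/π)·sin(x)) ≤ x(π - x)/2. -/

import Mathlib

open Real

lemma sin_ge_cubic (x : ℝ) (hx : 0 ≤ x) : x - x ^ 3 / 6 ≤ Real.sin x := by
  have hmono : Monotone (fun y : ℝ => Real.sin y - (y - y ^ 3 / 6)) := by
    apply monotone_of_deriv_nonneg
    · fun_prop
    · intro y
      have hd : HasDerivAt (fun y : ℝ => Real.sin y - (y - y ^ 3 / 6))
          (Real.cos y - (1 - 3 * y ^ 2 / 6)) y := by
        have h1 : HasDerivAt Real.sin (Real.cos y) y := Real.hasDerivAt_sin y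
        have h2 : HasDerivAt (fun y : ℝ => y - y ^ 3 / 6) (1 - 3 * y ^ 2 / 6) y := by
          have := ((hasDerivAt_pow 3 y).div_const 6)
          simpa [Pi.sub_def] using (hasDerivAt_id y).sub this
        exact h1.sub h2
      rw [hd.deriv]
      have := Real.one_sub_sq_div_two_le_cos (x := y)
      nlinarith [sq_nonneg y]
  have := hmono hx
  simpa using this

lemma cos_le_quartic (x : ℝ) (hx : 0 ≤ x) (hx2 : x ≤ 2) :
    Real.cos x ≤ 1 - x ^ 2 / 2 + x ^ 4 / 24 := by
  have h2 : Real.sin (x / 2) ^ 2 = 1 / 2 - Real.cos x / 2 := by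
    have := Real.sin_sq_eq_half_sub (x / 2)
    rw [show (2:ℝ) * (x / 2) = x by ring] at this
    linarith
  have h3 : x / 2 - (x / 2) ^ 3 / 6 ≤ Real.sin (x / 2) := sin_ge_cubic _ (by linarith)
  have h4 : (0:ℝ) ≤ x / 2 - (x / 2) ^ 3 / 6 := by nlinarith [mul_nonneg (mul_nonneg hx (by linarith : (0:ℝ) ≤ 2 - x)) (by linarith : (0:ℝ) ≤ x + 2)]
  have h5 : (x / 2 - (x / 2) ^ 3 / 6) ^ 2 ≤ Real.sin (x / 2) ^ 2 := by nlinarith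
  nlinarith [sq_nonneg (x ^ 3)]

lemma sin_le_quintic (x : ℝ) (hx : 0 ≤ x) (hx2 : x ≤ 2) :
    Real.sin x ≤ x - x ^ 3 / 6 + x ^ 5 / 120 := by
  have hd : ∀ y : ℝ, HasDerivAt (fun y : ℝ => y - y ^ 3 / 6 + y ^ 5 / 120 - Real.sin y)
      (1 - 3 * y ^ 2 / 6 + 5 * y ^ 4 / 120 - Real.cos y) y := by
    intro y
    have h1 : HasDerivAt (fun y : ℝ => y - y ^ 3 / 6 + y ^ 5 / 120)
        (1 - 3 * y ^ 2 / 6 + 5 * y ^ 4 / 120) y := by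
      have h3 := (hasDerivAt_pow 3 y).div_const 6
      have h5 := (hasDerivAt_pow 5 y).div_const 120
      simpa [Pi.sub_def, Pi.add_def] using ((hasDerivAt_id y).sub h3).add h5
    exact h1.sub (Real.hasDerivAt_sin y)
  have hmono : MonotoneOn (fun y : ℝ => y - y ^ 3 / 6 + y ^ 5 / 120 - Real.sin y)
      (Set.Icc (0:ℝ) 2) := by
    apply monotoneOn_of_deriv_nonneg (convex_Icc 0 2)
    · exact Continuous.continuousOn (by fun_prop)
    · intro y _
      exact (hd y).differentiableAt.differentiableWithinAt
    · intro y hy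
      rw [interior_Icc] at hy
      rw [(hd y).deriv]
      have := cos_le_quartic y hy.1.le hy.2.le
      nlinarith
  have h0 := hmono (Set.mem_Icc.2 ⟨le_refl 0, by norm_num⟩) (Set.mem_Icc.2 ⟨hx, hx2⟩) hx
  simpa using h0

lemma branchA (x : ℝ) (hx : 0 ≤ x) (hx9 : x ≤ 0.9) :
    (4 / π) * Real.sin x ≤ x * (π - x) / 2 := by
  have hq := sin_le_quintic x hx (by linarith)
  have hπ1 := Real.pi_gt_d6
  have hπ2 := Real.pi_lt_d6
  have h81 : (0:ℝ) ≤ 0.81 - x ^ 2 := by nlinarith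
  have hP : (0:ℝ) ≤ π ^ 2 - 8 - π * x + (4/3) * x ^ 2 - x ^ 4 / 15 := by
    nlinarith [sq_nonneg (x - 0.9), mul_nonneg (sq_nonneg x) h81,
      mul_le_mul_of_nonneg_right hπ2.le hx, sq_nonneg (π - 3.141592)]
  have hkey : 8 * (x - x ^ 3 / 6 + x ^ 5 / 120) ≤ π * (x * (π - x)) := by
    nlinarith [mul_nonneg hx hP]
  have hπ : (0:ℝ) < π := Real.pi_pos
  rw [div_mul_eq_mul_div, div_le_iff₀ hπ]
  nlinarith

/-- For all `x ∈ [0, π]`, `min(1, (4/π)·sin x) ≤ x(π - x)/2`. -/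
theorem min_bound_le_landscape (x : ℝ) (hx : x ∈ Set.Icc (0 : ℝ) π) :
    min 1 ((4 / π) * Real.sin x) ≤ x * (π - x) / 2 := by
  obtain ⟨h0, hπx⟩ := hx
  have hπ1 := Real.pi_gt_d6
  have hπ2 := Real.pi_lt_d6
  by_cases h1 : x ≤ 0.9
  · exact le_trans (min_le_right _ _) (branchA x h0 h1)
  by_cases h2 : π - 0.9 ≤ x
  · have hb := branchA (π - x) (by linarith) (by linarith)
    rw [Real.sin_pi_sub] at hb
    refine le_trans (min_le_right _ _) (le_trans hb ?_)
    nlinarith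
  · push_neg at h1 h2
    refine le_trans (min_le_left _ _) ?_
    nlinarith [mul_nonneg (by linarith : (0:ℝ) ≤ x - 0.9) (by linarith : (0:ℝ) ≤ π - 0.9 - x)]
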